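/- Let C be a linear code of length n over a finite commutative Frobenius ring R. Let A be the (t+1)×(t+1) 0–1 matrix with A_{ij} = 1 iff a_iR ⊆ a_jR, D = diag(|a_0R|, …, |a_tR|), and Q the 0–1 matrix with Q_{ij} = 1 iff a_jR ⊆ (a_iR)⊥ = {r ∈ R : a_i r = 0}. Then sse_{C⊥}(X) = (1/|C|) · sse_C(Q D A^{−1} X), as an identity of polynomials in the variables x_{iℓ} (i ∈ {0,…,t}, ℓ ∈ {1,…,n}). -/

import Mathlib

noncomputable section
open scoped BigOperators

/-- The dual of a linear code `C ⊆ Rⁿ` with respect to the standard inner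
product `u·v = ∑ ℓ, u ℓ * v ℓ`. -/
def dualCode {R : Type*} [CommRing R] {n : ℕ} (C : Submodule R (Fin n → R)) :
    Submodule R (Fin n → R) where
  carrier := {v | ∀ u ∈ C, ∑ ℓ, u ℓ * v ℓ = 0}
  add_mem' := by
    intro v w hv hw u hu
    simp only [Set.mem_setOf_eq] at *
    have h1 := hv u hu
    have h2 := hw u hu
    simp only [Pi.add_apply, mul_add, Finset.sum_add_distrib, h1, h2, add_zero]
  zero_mem' := by
    intro u hu
    simp
  smul_mem' := by
    intro c v hv u hu
    simp only [Set.mem_setOf_eq] at *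
    have h := hv u hu
    have : ∑ ℓ, u ℓ * (c • v) ℓ = c * ∑ ℓ, u ℓ * v ℓ := by
      rw [Finset.mul_sum]
      exact Finset.sum_congr rfl fun ℓ _ => by
        simp only [Pi.smul_apply, smul_eq_mul]; ring
    rw [this, h, mul_zero]

/-- A finite commutative ring is Frobenius iff `|C|·|C⊥| = |R|ⁿ` for every
linear code `C` of every length `n` over `R`. -/
def IsFrobeniusRing (R : Type*) [CommRing R] [Fintype R] : Prop :=
  ∀ (n : ℕ) (C : Submodule R (Fin n → R)),
    Nat.card C * Nat.card (dualCode C) = Fintype.card R ^ n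

open MvPolynomial Classical

/-- The symmetrized support enumerator
`sse_C = ∑_{c ∈ C} ∏_{ℓ} x_{i_c(ℓ), ℓ}`, where `i_c(ℓ)` is the unique index
with `c_ℓ R = a_{i_c(ℓ)} R`; the variable `X (i, ℓ)` plays the role of
`x_{iℓ}`. -/
def sse {R : Type*} [CommRing R] [Fintype R] {t n : ℕ} (a : Fin (t + 1) → R)
    (C : Submodule R (Fin n → R)) : MvPolynomial (Fin (t + 1) × Fin n) ℚ :=
  haveI : Fintype C := Fintype.ofFinite C
  ∑ c : C, ∏ ℓ : Fin n, ∏ i : Fin (t + 1),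
    if Ideal.span {(c : Fin n → R) ℓ} = Ideal.span {a i} then X (i, ℓ) else 1

/-!
Substituting `X ↦ A X` (invertible: `A` is unitriangular for the inclusion order of ideals)
expands both sides over the choices `κ` of one principal ideal `a_{κ ℓ} R` per coordinate. With
`M` the box `∏ ℓ, a_{κ ℓ} R`, the coefficient of `∏ ℓ, x_{κ ℓ, ℓ}` is `|C⊥ ∩ M|` on the left and
`|M| · |C ∩ M⊥| / |C|` on the right, since `(Q D)_{ij} = |a_j R| · [a_i a_j = 0]` and
`M⊥ = ∏ ℓ, ann(a_{κ ℓ})`. These agree by counting alone: over a Frobenius ring `M⊥⊥ = M`, so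
`C⊥ ∩ M = (C + M⊥)⊥`, and `|C + M⊥| · |C ∩ M⊥| = |C| · |M⊥|`, `|M| · |M⊥| = |R|ⁿ`.
-/

section LinearSubstitution

variable {K m ι : Type*} [CommSemiring K] [Fintype m]

/-- The substitution `x_{·ℓ} ↦ M x_{·ℓ}`, applied to every column of the variable matrix. -/
def linSubst (M : Matrix m m K) : MvPolynomial (m × ι) K →ₐ[K] MvPolynomial (m × ι) K :=
  bind₁ fun p => ∑ j, C (M p.1 j) * X (j, p.2)

@[simp]
lemma linSubst_X (M : Matrix m m K) (i : m) (ℓ : ι) :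
    linSubst M (X (i, ℓ)) = ∑ j, C (M i j) * X (j, ℓ) :=
  bind₁_X_right _ _

@[simp]
lemma linSubst_C (M : Matrix m m K) (c : K) : linSubst (ι := ι) M (C c) = C c :=
  bind₁_C_right _ _

lemma linSubst_linSubst (M N : Matrix m m K) (p : MvPolynomial (m × ι) K) :
    linSubst M (linSubst N p) = linSubst (N * M) p := by
  suffices (linSubst M).comp (linSubst N) = linSubst (ι := ι) (N * M) from
    DFunLike.congr_fun this p
  refine algHom_ext fun ⟨i, ℓ⟩ => ?_
  simp only [AlgHom.comp_apply, linSubst_X, map_sum, map_mul, linSubst_C, Matrix.mul_apply,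
    Finset.mul_sum, Finset.sum_mul, mul_assoc]
  exact Finset.sum_comm

lemma linSubst_one [DecidableEq m] (p : MvPolynomial (m × ι) K) : linSubst 1 p = p := by
  suffices linSubst (ι := ι) (1 : Matrix m m K) = AlgHom.id K _ from DFunLike.congr_fun this p
  refine algHom_ext fun ⟨i, ℓ⟩ => ?_
  simp [Matrix.one_apply]

lemma linSubst_injective [DecidableEq m] {M N : Matrix m m K} (h : M * N = 1) :
    Function.Injective (linSubst (ι := ι) M) :=
  Function.LeftInverse.injective (g := linSubst N) fun p => by
    rw [linSubst_linSubst, h, linSubst_one]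

lemma linSubst_sum_prod_X [Fintype ι] [DecidableEq ι] {α : Type*} (M : Matrix m m K)
    (s : Finset α) (f : α → ι → m) :
    linSubst M (∑ v ∈ s, ∏ ℓ, X (f v ℓ, ℓ)) =
      ∑ κ : ι → m, C (∑ v ∈ s, ∏ ℓ, M (f v ℓ) (κ ℓ)) * ∏ ℓ, X (κ ℓ, ℓ) := by
  simp only [map_sum, map_prod, linSubst_X, Finset.prod_univ_sum, Fintype.piFinset_univ,
    Finset.prod_mul_distrib]
  simp only [← map_prod]
  rw [Finset.sum_comm]
  simp only [← Finset.sum_mul, ← map_sum]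

end LinearSubstitution

/-- Grading each index by the number of indices below it makes the matrix block triangular,
and inside a block no two distinct indices are comparable. -/
lemma Matrix.det_zeta_of_injective {K m P : Type*} [CommRing K] [Fintype m] [DecidableEq m]
    [PartialOrder P] [DecidableLE P] {f : m → P} (hf : Function.Injective f) :
    (Matrix.of fun i j => if f i ≤ f j then (1 : K) else 0).det = 1 := by
  set Z : Matrix m m K := Matrix.of fun i j => if f i ≤ f j then 1 else 0
  set height : m → ℕ := fun i => (Finset.univ.filter fun j => f j ≤ f i).card
  have height_mono : ∀ {i j}, f i ≤ f j → height i ≤ height j := fun h =>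
    Finset.card_le_card fun k hk => by simp_all [le_trans _ h]
  have height_strictMono : ∀ {i j}, f i < f j → height i < height j := fun {i j} h => by
    refine Finset.card_lt_card ⟨fun k hk => by simp_all [le_trans _ h.le], fun hsub => ?_⟩
    have := hsub (Finset.mem_filter.2 ⟨Finset.mem_univ j, le_rfl⟩)
    simp only [Finset.mem_filter] at this
    exact h.not_ge this.2
  have htri : Z.BlockTriangular height := fun i j hlt =>
    if_neg fun h => (height_mono h).not_gt hlt
  rw [htri.det]
  refine Finset.prod_eq_one fun k _ => ?_
  suffices h : Z.toSquareBlock height k = 1 by rw [h, Matrix.det_one]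
  ext ⟨i, hi⟩ ⟨j, hj⟩
  simp only [Z, Matrix.toSquareBlock_def, Matrix.of_apply, Matrix.one_apply, Subtype.mk.injEq]
  congr 1
  refine propext ⟨fun h => hf (h.eq_of_not_lt fun hlt => ?_), fun h => h ▸ le_rfl⟩
  exact (height_strictMono hlt).ne (hi.trans hj.symm)

lemma AddSubgroup.card_sup_mul_card_inf {G : Type*} [AddCommGroup G] (H K : AddSubgroup G) :
    Nat.card ↥(H ⊔ K) * Nat.card ↥(H ⊓ K) = Nat.card H * Nat.card K := by
  have card_inf_mul_relIndex :
      ∀ H K : AddSubgroup G, Nat.card ↥(H ⊓ K) * H.relIndex K = Nat.card K := fun H K => by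
      rw [← AddSubgroup.relIndex_bot_left, ← AddSubgroup.inf_relIndex_right H K,
        AddSubgroup.relIndex_mul_relIndex _ _ _ bot_le inf_le_right, AddSubgroup.relIndex_bot_left]
  have hH := card_inf_mul_relIndex K H
  have hsup := card_inf_mul_relIndex K (K ⊔ H)
  rw [inf_sup_self, AddSubgroup.relIndex_sup_left] at hsup
  rw [sup_comm, ← hsup, ← hH, inf_comm]
  ring

lemma Submodule.card_sup_mul_card_inf {R M : Type*} [Ring R] [AddCommGroup M] [Module R M]
    (p q : Submodule R M) :
    Nat.card ↥(p ⊔ q) * Nat.card ↥(p ⊓ q) = Nat.card p * Nat.card q := by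
  have := AddSubgroup.card_sup_mul_card_inf p.toAddSubgroup q.toAddSubgroup
  rw [← Submodule.sup_toAddSubgroup] at this
  exact this

section Codes

variable {R : Type*} [CommRing R] {n : ℕ}

lemma le_dualCode_dualCode (C : Submodule R (Fin n → R)) : C ≤ dualCode (dualCode C) :=
  fun u hu v hv => by simpa only [mul_comm] using hv u hu

lemma dualCode_sup (C D : Submodule R (Fin n → R)) :
    dualCode (C ⊔ D) = dualCode C ⊓ dualCode D := by
  ext v
  refine ⟨fun hv => ⟨fun u hu => hv u (Submodule.mem_sup_left hu),
    fun u hu => hv u (Submodule.mem_sup_right hu)⟩, ?_⟩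
  rintro ⟨hC, hD⟩ w hw
  obtain ⟨u, hu, u', hu', rfl⟩ := Submodule.mem_sup.1 hw
  simp only [Pi.add_apply, add_mul, Finset.sum_add_distrib, hC u hu, hD u' hu', add_zero]

def idealBox (x : Fin n → R) : Submodule R (Fin n → R) :=
  Submodule.pi Set.univ fun ℓ => Ideal.span {x ℓ}

lemma mem_idealBox {x v : Fin n → R} : v ∈ idealBox x ↔ ∀ ℓ, v ℓ ∈ Ideal.span {x ℓ} := by
  simp [idealBox, Submodule.mem_pi]

lemma Ideal.forall_mem_span_singleton_mul_eq_zero {x y : R} :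
    (∀ s ∈ Ideal.span {x}, s * y = 0) ↔ x * y = 0 := by
  refine ⟨fun h => h x (Ideal.mem_span_singleton_self x), fun h s hs => ?_⟩
  obtain ⟨c, rfl⟩ := Ideal.mem_span_singleton'.1 hs
  rw [mul_assoc, h, mul_zero]

lemma mem_dualCode_idealBox {x v : Fin n → R} :
    v ∈ dualCode (idealBox x) ↔ ∀ ℓ, v ℓ * x ℓ = 0 := by
  refine ⟨fun hv ℓ => ?_, fun hv u hu => Finset.sum_eq_zero fun ℓ _ => ?_⟩
  · have hsingle : Pi.single ℓ (x ℓ) ∈ idealBox x := mem_idealBox.2 fun k => by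
      rcases eq_or_ne k ℓ with rfl | hk
      · simp
      · simp [hk]
    simpa [Pi.single_apply, mul_comm] using hv _ hsingle
  · exact Ideal.forall_mem_span_singleton_mul_eq_zero.2 ((mul_comm _ _).trans (hv ℓ)) _
      (mem_idealBox.1 hu ℓ)

lemma card_idealBox (x : Fin n → R) :
    Nat.card (idealBox x) = ∏ ℓ, Nat.card (Ideal.span {x ℓ}) := by
  rw [← Nat.card_pi]
  exact Nat.card_congr
    ((Equiv.subtypeEquivRight fun _ => mem_idealBox).trans (Equiv.subtypePiEquivPi))

variable [Fintype R]

lemma IsFrobeniusRing.dualCode_dualCode (hR : IsFrobeniusRing R) (C : Submodule R (Fin n → R)) :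
    dualCode (dualCode C) = C := by
  have hcard : Nat.card (dualCode (dualCode C)) = Nat.card C :=
    Nat.eq_of_mul_eq_mul_left (Nat.card_pos (α := dualCode C)) <| by
      rw [hR n (dualCode C), mul_comm, hR n C]
  exact (SetLike.coe_injective (Set.Finite.eq_of_subset_of_card_le (Set.toFinite _)
    (le_dualCode_dualCode C) hcard.le)).symm

lemma IsFrobeniusRing.card_mul_card_dualCode_inf (hR : IsFrobeniusRing R)
    (C M : Submodule R (Fin n → R)) :
    Nat.card C * Nat.card ↥(dualCode C ⊓ M) = Nat.card ↥(C ⊓ dualCode M) * Nat.card M := by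
  have hN := hR n (C ⊔ dualCode M)
  rw [dualCode_sup, hR.dualCode_dualCode] at hN
  have hM := hR n M
  have hsup := Submodule.card_sup_mul_card_inf C (dualCode M)
  refine Nat.eq_of_mul_eq_mul_left (Nat.card_pos (α := ↥(C ⊔ dualCode M))) ?_
  calc Nat.card ↥(C ⊔ dualCode M) * (Nat.card C * Nat.card ↥(dualCode C ⊓ M))
      = Nat.card C * (Nat.card M * Nat.card (dualCode M)) := by rw [hM, ← hN]; ring
    _ = Nat.card C * Nat.card (dualCode M) * Nat.card M := by ring
    _ = _ := by rw [← hsup]; ring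

end Codes

section SymmetrizedSupportEnumerator

variable {R : Type*} [CommRing R] {t n : ℕ} {a : Fin (t + 1) → R} {idx : R → Fin (t + 1)}

lemma sum_prod_boole_eq_card_inf {K : Type*} [CommSemiring K] [Fintype R]
    (W W' : Submodule R (Fin n → R)) (p : Fin n → R → Prop)
    (hW' : ∀ v, v ∈ W' ↔ ∀ ℓ, p ℓ (v ℓ)) :
    ∑ v ∈ Finset.univ.filter (· ∈ W), ∏ ℓ, (if p ℓ (v ℓ) then (1 : K) else 0) =
      Nat.card ↥(W ⊓ W') := by
  simp only [Fintype.prod_boole, Finset.sum_boole, Finset.filter_filter, ← hW',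
    Nat.card_eq_fintype_card, Fintype.card_subtype, Submodule.mem_inf]

lemma inclusionMatrix_apply_idx {A : Matrix (Fin (t + 1)) (Fin (t + 1)) ℚ}
    (hA : ∀ i j, A i j = if Ideal.span {a i} ≤ Ideal.span {a j} then 1 else 0)
    (hidx : ∀ r, Ideal.span {r} = Ideal.span {a (idx r)}) (r : R) (k : Fin (t + 1)) :
    A (idx r) k = if r ∈ Ideal.span {a k} then 1 else 0 := by
  rw [hA, ← hidx, Ideal.span_singleton_le_iff_mem]

-- `Fintype R` is what decides the condition of the `if` in `hQ`, so it must be in scope here.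
variable [Fintype R]

lemma annihilatorMatrix_apply_idx {Q : Matrix (Fin (t + 1)) (Fin (t + 1)) ℚ}
    (hQ : ∀ i j, Q i j = if ∀ r ∈ Ideal.span {a j}, a i * r = 0 then 1 else 0)
    (hidx : ∀ r, Ideal.span {r} = Ideal.span {a (idx r)}) (r : R) (k : Fin (t + 1)) :
    Q (idx r) k = if r * a k = 0 then 1 else 0 := by
  refine (hQ _ _).trans (if_congr ?_ rfl rfl)
  calc (∀ s ∈ Ideal.span {a k}, a (idx r) * s = 0)
      ↔ ∀ s ∈ Ideal.span {a k}, s * a (idx r) = 0 := by simp only [mul_comm]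
    _ ↔ ∀ s ∈ Ideal.span {a (idx r)}, s * a k = 0 := by
      rw [Ideal.forall_mem_span_singleton_mul_eq_zero, mul_comm,
        Ideal.forall_mem_span_singleton_mul_eq_zero]
    _ ↔ r * a k = 0 := by rw [← hidx, Ideal.forall_mem_span_singleton_mul_eq_zero]

lemma sse_eq_sum_prod_X (hinj : ∀ i j, Ideal.span {a i} = Ideal.span {a j} → i = j)
    (hidx : ∀ r, Ideal.span {r} = Ideal.span {a (idx r)}) (C : Submodule R (Fin n → R)) :
    sse a C = ∑ v ∈ Finset.univ.filter (· ∈ C), ∏ ℓ, X (idx (v ℓ), ℓ) := by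
  have hspan : ∀ r i, Ideal.span {r} = Ideal.span {a i} ↔ idx r = i := fun r i =>
    ⟨fun h => hinj _ _ ((hidx r).symm.trans h), fun h => h ▸ hidx r⟩
  have hprod : ∀ r ℓ, ∏ i, (if Ideal.span {r} = Ideal.span {a i} then X (i, ℓ) else 1 :
      MvPolynomial (Fin (t + 1) × Fin n) ℚ) = X (idx r, ℓ) := fun r ℓ => by
    rw [Finset.prod_congr rfl fun i _ => if_congr (hspan r i) rfl rfl]
    simp
  simp only [sse, hprod]
  symm
  apply Finset.sum_subtype
  simp

lemma sum_prod_inclusionMatrix {A : Matrix (Fin (t + 1)) (Fin (t + 1)) ℚ}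
    (hA : ∀ i j, A i j = if Ideal.span {a i} ≤ Ideal.span {a j} then 1 else 0)
    (hidx : ∀ r, Ideal.span {r} = Ideal.span {a (idx r)})
    (W : Submodule R (Fin n → R)) (κ : Fin n → Fin (t + 1)) :
    ∑ v ∈ Finset.univ.filter (· ∈ W), ∏ ℓ, A (idx (v ℓ)) (κ ℓ) =
      Nat.card ↥(W ⊓ idealBox (a ∘ κ)) := by
  simp only [inclusionMatrix_apply_idx hA hidx]
  exact sum_prod_boole_eq_card_inf _ _ _ fun _ => mem_idealBox

lemma sum_prod_annihilatorMatrix_mul_diagonal {Q D : Matrix (Fin (t + 1)) (Fin (t + 1)) ℚ}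
    (hQ : ∀ i j, Q i j = if ∀ r ∈ Ideal.span {a j}, a i * r = 0 then 1 else 0)
    (hD : D = Matrix.diagonal fun i => (Nat.card (Ideal.span {a i}) : ℚ))
    (hidx : ∀ r, Ideal.span {r} = Ideal.span {a (idx r)})
    (W : Submodule R (Fin n → R)) (κ : Fin n → Fin (t + 1)) :
    ∑ v ∈ Finset.univ.filter (· ∈ W), ∏ ℓ, (Q * D) (idx (v ℓ)) (κ ℓ) =
      Nat.card ↥(W ⊓ dualCode (idealBox (a ∘ κ))) * Nat.card (idealBox (a ∘ κ)) := by
  simp only [hD, Matrix.mul_diagonal, annihilatorMatrix_apply_idx hQ hidx,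
    Finset.prod_mul_distrib, ← Finset.sum_mul, card_idealBox, Nat.cast_prod]
  rw [sum_prod_boole_eq_card_inf W _ (fun ℓ r => r * a (κ ℓ) = 0) fun _ => mem_dualCode_idealBox]
  rfl

end SymmetrizedSupportEnumerator

/-- the MacWilliams identity for the symmetrized support
enumerator, `sse_{C⊥}(X) = (1/|C|) · sse_C(Q D A⁻¹ X)`. -/
theorem stmt14 {R : Type*} [CommRing R] [Fintype R] (hR : IsFrobeniusRing R)
    {t : ℕ} (a : Fin (t + 1) → R)
    (hrep : ∀ r : R, ∃ i, Ideal.span {r} = Ideal.span {a i})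
    (hinj : ∀ i j, Ideal.span {a i} = Ideal.span {a j} → i = j)
    {n : ℕ} (C : Submodule R (Fin n → R))
    (A D Q : Matrix (Fin (t + 1)) (Fin (t + 1)) ℚ)
    (hA : ∀ i j, A i j = if Ideal.span {a i} ≤ Ideal.span {a j} then 1 else 0)
    (hD : D = Matrix.diagonal fun i => (Nat.card (Ideal.span {a i}) : ℚ))
    (hQ : ∀ i j, Q i j =
      if ∀ r ∈ Ideal.span {a j}, a i * r = 0 then 1 else 0) :
    sse a (dualCode C) =
      MvPolynomial.C ((Nat.card C : ℚ)⁻¹) *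
        (MvPolynomial.bind₁ (fun p : Fin (t + 1) × Fin n =>
          ∑ j : Fin (t + 1), MvPolynomial.C ((Q * D * A⁻¹) p.1 j) * X (j, p.2)))
          (sse a C) := by
  choose idx hidx using hrep
  have hA_det : IsUnit A.det := by
    have hA' : A = Matrix.of fun i j => if Ideal.span {a i} ≤ Ideal.span {a j} then 1 else 0 :=
      Matrix.ext hA
    rw [hA', Matrix.det_zeta_of_injective hinj]
    exact isUnit_one
  apply linSubst_injective (Matrix.mul_nonsing_inv A hA_det)
  change linSubst A _ = linSubst A (MvPolynomial.C _ * linSubst (Q * D * A⁻¹) (sse a C))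
  rw [map_mul, linSubst_C, linSubst_linSubst, Matrix.nonsing_inv_mul_cancel_right A _ hA_det,
    sse_eq_sum_prod_X hinj hidx, sse_eq_sum_prod_X hinj hidx, linSubst_sum_prod_X,
    linSubst_sum_prod_X, Finset.mul_sum]
  refine Finset.sum_congr rfl fun κ _ => ?_
  rw [← mul_assoc, ← C_mul, sum_prod_inclusionMatrix hA hidx,
    sum_prod_annihilatorMatrix_mul_diagonal hQ hD hidx]
  congr 2
  have hC : (Nat.card C : ℚ) ≠ 0 := Nat.cast_ne_zero.2 Nat.card_pos.ne'
  rw [eq_inv_mul_iff_mul_eq₀ hC]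
  exact_mod_cast hR.card_mul_card_dualCode_inf C (idealBox (a ∘ κ))

end
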